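/- Let f : ℝ → ℝ be C¹ with f and f' bounded, let x₀ be a point where f' attains its maximum M = f'(x₀) with M < 1, and define N₂ = -(c/(2π)) PV ∫_ℝ ((f'(x₀) - Δ_α f(x₀))/(x₀ - α)²)·Q(x₀,α) dα with Q(x₀,α) = 2(1 + f'(x₀)·Δ_α f(x₀))/(1 + (Δ_α f(x₀))²)², c > 0, and Δ_α f(x₀) = (f(x₀)-f(α))/(x₀-α). Assuming the principal value integral converges, N₂ ≤ 0. -/

import Mathlib

open MeasureTheory

/-
At a maximum point x₀ of f' every difference quotient Δ_α f(x₀) is a mean of values of f',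
hence |Δ_α f(x₀)| ≤ M = f'(x₀) < 1. Then f'(x₀) - Δ_α f(x₀) ≥ 0 and
1 + f'(x₀) Δ_α f(x₀) ≥ 1 - M² > 0, so the integrand is pointwise nonnegative, and so is its
integral; the prefactor -c/(2π) is negative.
-/

theorem abs_slope_le_of_abs_deriv_le {f : ℝ → ℝ} {M : ℝ} (hf : Differentiable ℝ f)
    (hbd : ∀ x, |deriv f x| ≤ M) (x y : ℝ) : |(f x - f y) / (x - y)| ≤ M := by
  rcases eq_or_ne x y with rfl | hxy
  · simpa using (abs_nonneg _).trans (hbd x)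
  · rw [abs_div, div_le_iff₀ (abs_pos.mpr (sub_ne_zero.mpr hxy))]
    simpa only [Real.norm_eq_abs] using convex_univ.norm_image_sub_le_of_norm_deriv_le
      (fun z _ => hf z) (fun z _ => hbd z) (Set.mem_univ y) (Set.mem_univ x)

theorem muskat_integrand_nonneg {M Δ h : ℝ} (hΔ : |Δ| ≤ M) (hM1 : M < 1) :
    0 ≤ (M - Δ) / h ^ 2 * (2 * (1 + M * Δ) / (1 + Δ ^ 2) ^ 2) := by
  have hM0 : 0 ≤ M := (abs_nonneg Δ).trans hΔ
  have hgap : 0 ≤ M - Δ := by linarith [le_abs_self Δ]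
  have hQ : 0 ≤ 1 + M * Δ := by nlinarith [neg_abs_le Δ]
  positivity

theorem muskat_N2_nonpositive_general (f : ℝ → ℝ) (x₀ M c : ℝ)
    (hf : ContDiff ℝ 1 f)
    (hM : deriv f x₀ = M) (hbd : ∀ x, |deriv f x| ≤ M) (hM1 : M < 1) (hc : 0 < c) :
    -(c / (2 * Real.pi)) *
      (∫ α : ℝ, (deriv f x₀ - (f x₀ - f α) / (x₀ - α)) / (x₀ - α) ^ 2 *
        (2 * (1 + deriv f x₀ * ((f x₀ - f α) / (x₀ - α))) /
          (1 + ((f x₀ - f α) / (x₀ - α)) ^ 2) ^ 2)) ≤ 0 := by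
  subst hM
  have hslope := abs_slope_le_of_abs_deriv_le (hf.differentiable one_ne_zero) hbd x₀
  refine mul_nonpos_of_nonpos_of_nonneg (neg_nonpos.mpr (by positivity)) ?_
  exact integral_nonneg fun α => muskat_integrand_nonneg (hslope α) hM1

/-- Core of Lemma 5.1: with ‖f'‖_∞ = M < 1 attained at x₀ and c > 0, the term
N₂ = -(c/(2π)) ∫ ((f'(x₀) - Δ_α f(x₀))/(x₀-α)²)·Q(x₀,α) dα is nonpositive. -/
theorem muskat_N2_nonpositive (f : ℝ → ℝ) (x₀ M c : ℝ)
    (hf : ContDiff ℝ 1 f) (hfb : ∃ C, ∀ x, |f x| ≤ C)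
    (hM : deriv f x₀ = M) (hbd : ∀ x, |deriv f x| ≤ M) (hM1 : M < 1) (hc : 0 < c)
    (hconv : Integrable fun α : ℝ =>
      (deriv f x₀ - (f x₀ - f α) / (x₀ - α)) / (x₀ - α) ^ 2 *
        (2 * (1 + deriv f x₀ * ((f x₀ - f α) / (x₀ - α))) /
          (1 + ((f x₀ - f α) / (x₀ - α)) ^ 2) ^ 2)) :
    -(c / (2 * Real.pi)) *
      (∫ α : ℝ, (deriv f x₀ - (f x₀ - f α) / (x₀ - α)) / (x₀ - α) ^ 2 *
        (2 * (1 + deriv f x₀ * ((f x₀ - f α) / (x₀ - α))) /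
          (1 + ((f x₀ - f α) / (x₀ - α)) ^ 2) ^ 2)) ≤ 0 :=
  muskat_N2_nonpositive_general f x₀ M c hf hM hbd hM1 hc
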